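/- Let g ≥ 1 and n ≥ 3. For every x ∈ A_g^n one has f_n(x) = x₁⋯xₙ ≥ g/t_{g,n}², with equality if and only if x = y(g,n,n); that is, f_n attains its minimum on A_g^n precisely at the point y(g,n,n) = (1/s_{g,1}, …, 1/s_{g,n−1}, 1/t_{g,n}), and the minimum value is g/t_{g,n}². -/

import Mathlib

open Finset

/-- The `g`-Sylvester sequence: `s_{g,1} = g+1`, `s_{g,k+1} = s_{g,k}(s_{g,k}-1)+1`.
(The value at `0` is junk and never used.) -/
def sylv (g : ℕ) : ℕ → ℕ
  | 0 => 0
  | 1 => g + 1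
  | k + 2 => sylv g (k + 1) * (sylv g (k + 1) - 1) + 1

/-- The truncated `g`-Sylvester sequence `t_{g,k} = s_{g,k} - 1`. -/
def tsylv (g k : ℕ) : ℕ := sylv g k - 1

/-- The product `x₁⋯x_k` of the first `k` coordinates. -/
def prodHead {n : ℕ} (x : Fin n → ℝ) (k : ℕ) : ℝ :=
  ∏ i ∈ Finset.univ.filter (fun i : Fin n => i.val < k), x i

/-- The sum `x_{k+1} + ⋯ + xₙ` of the last `n - k` coordinates. -/
def sumTail {n : ℕ} (x : Fin n → ℝ) (k : ℕ) : ℝ :=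
  ∑ i ∈ Finset.univ.filter (fun i : Fin n => k ≤ i.val), x i

/-- The compact set `A_g^n` of points `x ∈ ℝⁿ` with `x₁ ≥ ⋯ ≥ xₙ ≥ 0`,
`x₁ + ⋯ + xₙ = 1/g` and `x₁⋯x_k ≤ g(x_{k+1} + ⋯ + xₙ)` for `k = 1,…,n-1`. -/
def Agn (g n : ℕ) : Set (Fin n → ℝ) :=
  {x | Antitone x ∧ (∀ i, 0 ≤ x i) ∧ (∑ i, x i) = 1 / (g : ℝ) ∧
    ∀ k, 1 ≤ k → k ≤ n - 1 → prodHead x k ≤ (g : ℝ) * sumTail x k}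

/-- The point `y(g,n,k) ∈ A_g^n`: its first `k-1` coordinates are
`1/s_{g,1},…,1/s_{g,k-1}` and its last `n-k+1` coordinates all equal
`1/((n-k+1)·t_{g,k})`. -/
noncomputable def ypt (g n k : ℕ) : Fin n → ℝ := fun i =>
  if i.val + 1 ≤ k - 1 then 1 / (sylv g (i.val + 1) : ℝ)
  else 1 / (((n - k + 1 : ℕ) : ℝ) * (tsylv g k : ℝ))

section base
variable {n : ℕ} (x : Fin n → ℝ)

lemma prodHead_zero : prodHead x 0 = 1 := by simp [prodHead]

lemma filter_lt_succ (k : ℕ) (hk : k < n) :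
    Finset.univ.filter (fun i : Fin n => i.val < k + 1) =
      insert ⟨k, hk⟩ (Finset.univ.filter (fun i : Fin n => i.val < k)) := by
  ext i
  simp [Nat.lt_succ_iff_lt_or_eq, Fin.ext_iff, or_comm]
  exact le_iff_eq_or_lt

lemma prodHead_succ (k : ℕ) (hk : k < n) :
    prodHead x (k + 1) = prodHead x k * x ⟨k, hk⟩ := by
  rw [prodHead, filter_lt_succ k hk, prod_insert (by simp), prodHead, mul_comm]

lemma filter_le_eq (k : ℕ) (hk : k < n) :
    Finset.univ.filter (fun i : Fin n => k ≤ i.val) =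
      insert (⟨k, hk⟩ : Fin n) (Finset.univ.filter (fun i : Fin n => k + 1 ≤ i.val)) := by
  ext i
  simp only [mem_filter, mem_univ, true_and, mem_insert, Fin.ext_iff]
  omega

lemma sumTail_eq (k : ℕ) (hk : k < n) :
    sumTail x k = x ⟨k, hk⟩ + sumTail x (k + 1) := by
  rw [sumTail, filter_le_eq k hk, sum_insert (by simp), sumTail]

lemma sumTail_zero : sumTail x 0 = ∑ i, x i := by simp [sumTail]

lemma prodHead_of_ge (k : ℕ) (hk : n ≤ k) : prodHead x k = ∏ i, x i := by
  unfold prodHead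
  congr 1
  ext i
  simp only [mem_filter, mem_univ, true_and, iff_true]
  omega

lemma sumTail_of_ge (k : ℕ) (hk : n ≤ k) : sumTail x k = 0 := by
  unfold sumTail
  rw [filter_false_of_mem, sum_empty]
  intro i _
  simp only [not_le]
  omega
end base

section pos
variable {g n : ℕ} {x : Fin n → ℝ}

lemma sumTail_nonneg (hx0 : ∀ i, 0 ≤ x i) (k : ℕ) : 0 ≤ sumTail x k :=
  Finset.sum_nonneg fun i _ => hx0 i

lemma prodHead_pos (hx0 : ∀ i, 0 < x i) (k : ℕ) : 0 < prodHead x k :=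
  Finset.prod_pos fun i _ => hx0 i

lemma Agn.sum_pos (hg : 1 ≤ g) (hx : x ∈ Agn g n) : (0:ℝ) < ∑ i, x i := by
  rw [hx.2.2.1]
  positivity

lemma Agn.coord_pos (hg : 1 ≤ g) (hx : x ∈ Agn g n) : ∀ i, 0 < x i := by
  obtain ⟨hmono, hx0, hsum, hcon⟩ := hx
  by_contra hcon0
  push_neg at hcon0
  have hne : (Finset.univ.filter (fun i : Fin n => x i ≤ 0)).Nonempty := by
    obtain ⟨i, hi⟩ := hcon0
    exact ⟨i, by simp [hi]⟩
  set i0 := (Finset.univ.filter (fun i : Fin n => x i ≤ 0)).min' hne with hi0def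
  have hi0mem : x i0 ≤ 0 := by
    have := Finset.min'_mem _ hne
    simpa using this
  have hlt : ∀ j : Fin n, j < i0 → 0 < x j := by
    intro j hj
    by_contra hj'
    push_neg at hj'
    have : i0 ≤ j := Finset.min'_le _ _ (by simp [hj'])
    exact absurd hj (not_lt.2 this)
  have hge : ∀ j : Fin n, i0 ≤ j → x j = 0 :=
    fun j hj => le_antisymm (le_trans (hmono hj) hi0mem) (hx0 j)
  by_cases h0 : i0.val = 0
  · have : ∀ j : Fin n, x j = 0 := by
      intro j
      exact hge j (by omega)
    have : (∑ i, x i) = 0 := Finset.sum_eq_zero fun i _ => this i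
    have hpos : (0:ℝ) < ∑ i, x i := by rw [hsum]; positivity
    linarith
  · have h1 : 1 ≤ i0.val := by omega
    have h2 : i0.val ≤ n - 1 := by omega
    have hP : 0 < prodHead x i0.val := by
      apply Finset.prod_pos
      intro i hi
      simp only [Finset.mem_filter] at hi
      exact hlt i (by exact hi.2)
    have hS : sumTail x i0.val = 0 := by
      apply Finset.sum_eq_zero
      intro i hi
      simp only [Finset.mem_filter] at hi
      exact hge i (by exact hi.2)
    have := hcon i0.val h1 h2
    rw [hS] at this
    simp only [mul_zero] at this
    linarith

lemma Agn.coord_le (hg : 1 ≤ g) (hx : x ∈ Agn g n) (i : Fin n) : x i ≤ 1 := by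
  have h1 : x i ≤ ∑ j, x j :=
    Finset.single_le_sum (fun j _ => hx.2.1 j) (Finset.mem_univ i)
  have h2 : (1:ℝ)/g ≤ 1 := by
    rw [div_le_one (by positivity)]
    exact_mod_cast hg
  linarith [hx.2.2.1 ▸ h1]

lemma sumTail_pos (hg : 1 ≤ g) (hx : x ∈ Agn g n) (k : ℕ) (hk : k < n) :
    0 < sumTail x k := by
  rw [sumTail_eq x k hk]
  have := sumTail_nonneg hx.2.1 (k+1)
  have := Agn.coord_pos hg hx ⟨k, hk⟩
  linarith
end pos
section sylvester
variable {g : ℕ}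

lemma sylv_ge (hg : 1 ≤ g) : ∀ k, 1 ≤ k → g + 1 ≤ sylv g k := by
  intro k hk
  induction k with
  | zero => omega
  | succ m ih =>
    match m, ih with
    | 0, _ => simp [sylv]
    | m+1, ih =>
      have h1 : g + 1 ≤ sylv g (m+1) := ih (by omega)
      show g + 1 ≤ sylv g (m+1) * (sylv g (m+1) - 1) + 1
      have h2 : g ≤ sylv g (m+1) - 1 := by omega
      calc g + 1 ≤ (g+1) * g + 1 := by nlinarith
        _ ≤ sylv g (m+1) * (sylv g (m+1) - 1) + 1 := by
            have := Nat.mul_le_mul h1 h2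
            omega

lemma tsylv_one : tsylv g 1 = g := by simp [tsylv, sylv]

lemma tsylv_succ (hg : 1 ≤ g) (k : ℕ) (hk : 1 ≤ k) :
    tsylv g (k+1) = tsylv g k * sylv g k := by
  have h1 : g + 1 ≤ sylv g k := sylv_ge hg k hk
  match k, hk with
  | m+1, _ =>
    show sylv g (m+2) - 1 = tsylv g (m+1) * sylv g (m+1)
    show sylv g (m+1) * (sylv g (m+1) - 1) + 1 - 1 = tsylv g (m+1) * sylv g (m+1)
    unfold tsylv
    rw [Nat.mul_comm]
    omega

lemma tsylv_ge (hg : 1 ≤ g) (k : ℕ) (hk : 1 ≤ k) : g ≤ tsylv g k := by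
  have := sylv_ge hg k hk
  unfold tsylv
  omega

lemma tsylv_pos (hg : 1 ≤ g) (k : ℕ) (hk : 1 ≤ k) : 0 < (tsylv g k : ℝ) := by
  have := tsylv_ge hg k hk
  have : 1 ≤ tsylv g k := by omega
  exact_mod_cast Nat.lt_of_lt_of_le Nat.zero_lt_one this

lemma sylv_cast_eq (hg : 1 ≤ g) (k : ℕ) (hk : 1 ≤ k) :
    (sylv g k : ℝ) = (tsylv g k : ℝ) + 1 := by
  have := sylv_ge hg k hk
  unfold tsylv
  push_cast [Nat.cast_sub (by omega : 1 ≤ sylv g k)]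
  ring

lemma sylv_pos (hg : 1 ≤ g) (k : ℕ) (hk : 1 ≤ k) : 0 < (sylv g k : ℝ) := by
  have := sylv_ge hg k hk
  exact_mod_cast Nat.lt_of_lt_of_le Nat.zero_lt_one (by omega)

lemma tsylv_cast_succ (hg : 1 ≤ g) (k : ℕ) (hk : 1 ≤ k) :
    (tsylv g (k+1) : ℝ) = (tsylv g k : ℝ) * (sylv g k : ℝ) := by
  rw [tsylv_succ hg k hk]
  push_cast
  ring
end sylvester
section tight
variable {g n : ℕ} {x : Fin n → ℝ}

lemma one_div_tsylv_sub (hg : 1 ≤ g) (k : ℕ) (hk : 1 ≤ k) :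
    1 / (tsylv g k : ℝ) - 1 / (tsylv g (k+1) : ℝ) = 1 / (sylv g k : ℝ) := by
  have ht : 0 < (tsylv g k : ℝ) := tsylv_pos hg k hk
  have hs : (sylv g k : ℝ) = (tsylv g k : ℝ) + 1 := sylv_cast_eq hg k hk
  rw [tsylv_cast_succ hg k hk, hs]
  field_simp
  ring

lemma tight_chainK (hg : 1 ≤ g) (hx : x ∈ Agn g n) (K : ℕ) (hKn : K ≤ n - 1)
    (ht : ∀ k, 1 ≤ k → k ≤ K → prodHead x k = (g:ℝ) * sumTail x k) :
    ∀ k, k ≤ K → sumTail x k = 1 / (tsylv g (k+1) : ℝ) ∧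
      prodHead x k = (g:ℝ) / (tsylv g (k+1) : ℝ) := by
  have hgpos : (0:ℝ) < g := by exact_mod_cast hg
  have hgne : (g:ℝ) ≠ 0 := ne_of_gt hgpos
  intro k
  induction k with
  | zero =>
    intro _
    refine ⟨?_, ?_⟩
    · rw [sumTail_zero, hx.2.2.1, tsylv_one]
    · rw [prodHead_zero, tsylv_one]
      field_simp
  | succ k ih =>
    intro hk1
    obtain ⟨hS, hP⟩ := ih (by omega)
    have hkn : k < n := by omega
    have ht1 : 0 < (tsylv g (k+1) : ℝ) := tsylv_pos hg (k+1) (by omega)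
    have ht2 : 0 < (tsylv g (k+2) : ℝ) := tsylv_pos hg (k+2) (by omega)
    have hs1 : 0 < (sylv g (k+1) : ℝ) := sylv_pos hg (k+1) (by omega)
    have hse : (sylv g (k+1) : ℝ) = (tsylv g (k+1) : ℝ) + 1 := sylv_cast_eq hg (k+1) (by omega)
    have hts : (tsylv g (k+2) : ℝ) = (tsylv g (k+1) : ℝ) * (sylv g (k+1) : ℝ) :=
      tsylv_cast_succ hg (k+1) (by omega)
    have htight := ht (k+1) (by omega) hk1
    rw [prodHead_succ x k hkn] at htight
    rw [sumTail_eq x k hkn] at hS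
    set t := (tsylv g (k+1) : ℝ) with htdef
    set c := x ⟨k, hkn⟩ with hc
    set S := sumTail x (k+1) with hSdef
    have e1 : prodHead x k * t = g := by rw [hP]; field_simp
    have hS2 : (c + S) * t = 1 := by rw [hS]; field_simp
    have e3 : c * (t + 1) = 1 := by
      have e2 : (g:ℝ) * (c * (t+1) - 1) = 0 := by
        linear_combination (-c) * e1 + t * htight + (g:ℝ) * hS2
      rcases mul_eq_zero.1 e2 with h | h
      · exact absurd h hgne
      · linarith
    have hxc : c = 1 / (sylv g (k+1) : ℝ) := by
      rw [hse, eq_div_iff (by linarith)]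
      exact e3
    have hSval : S = 1 / (tsylv g (k+2) : ℝ) := by
      have hS3 : S = 1 / t - c := by
        have : c + S = 1 / t := by
          rw [eq_div_iff (ne_of_gt ht1)]; exact hS2
        linarith
      rw [hS3, hxc, ← one_div_tsylv_sub hg (k+1) (by omega)]
      rw [show k + 1 + 1 = k + 2 from rfl, htdef]
      ring
    refine ⟨hSval, ?_⟩
    rw [prodHead_succ x k hkn, hP, ← hc, hxc, hts, hse]
    rw [div_mul_div_comm, mul_one]

lemma tight_chain (hg : 1 ≤ g) (hx : x ∈ Agn g n)
    (ht : ∀ k, 1 ≤ k → k ≤ n - 1 → prodHead x k = (g:ℝ) * sumTail x k) :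
    ∀ k, k ≤ n - 1 → sumTail x k = 1 / (tsylv g (k+1) : ℝ) ∧
      prodHead x k = (g:ℝ) / (tsylv g (k+1) : ℝ) :=
  tight_chainK hg hx (n-1) (le_refl _) ht

lemma tight_coord (hg : 1 ≤ g) (hx : x ∈ Agn g n)
    (ht : ∀ k, 1 ≤ k → k ≤ n - 1 → prodHead x k = (g:ℝ) * sumTail x k)
    (hn : 1 ≤ n) : x = ypt g n n := by
  have hchain := tight_chain hg hx ht
  funext i
  simp only [ypt]
  by_cases hi : i.val + 1 ≤ n - 1
  · rw [if_pos hi]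
    have h1 := hchain i.val (by omega)
    have h2 := hchain (i.val + 1) (by omega)
    have hkn : i.val < n := i.isLt
    rw [sumTail_eq x i.val hkn] at h1
    have key : x ⟨i.val, hkn⟩ = 1 / (tsylv g (i.val+1) : ℝ) - 1 / (tsylv g (i.val+1+1) : ℝ) := by
      have := h2.1
      rw [show i.val + 1 + 1 = i.val + 2 from rfl]
      have h21 : sumTail x (i.val+1) = 1 / (tsylv g (i.val+2) : ℝ) := by
        convert h2.1 using 3
      linarith [h1.1]
    rw [one_div_tsylv_sub hg (i.val+1) (by omega)] at key
    exact key.trans (by rfl)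
  · rw [if_neg hi]
    have hin : i.val = n - 1 := by omega
    have h1 := hchain (n-1) (le_refl _)
    have hkn : n - 1 < n := by omega
    rw [sumTail_eq x (n-1) hkn, sumTail_of_ge x (n-1+1) (by omega)] at h1
    have hxi : x ⟨n-1, hkn⟩ = 1 / (tsylv g (n-1+1) : ℝ) := by
      have := h1.1; linarith
    have hnn : n - 1 + 1 = n := by omega
    rw [hnn] at hxi
    rw [show n - n + 1 = 1 by omega]
    have hieq : x i = x ⟨n-1, hkn⟩ := by congr 1; exact Fin.ext hin
    rw [hieq, hxi]
    norm_num

lemma prod_eq_prodHead : (∏ i, x i) = prodHead x n := (prodHead_of_ge x n (le_refl n)).symm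

lemma tight_value (hg : 1 ≤ g) (hx : x ∈ Agn g n) (hn : 2 ≤ n)
    (ht : ∀ k, 1 ≤ k → k ≤ n - 1 → prodHead x k = (g:ℝ) * sumTail x k) :
    (∏ i, x i) = (g:ℝ) / (tsylv g n : ℝ) ^ 2 := by
  have hchain := tight_chain hg hx ht (n-1) (le_refl _)
  have hkn : n - 1 < n := by omega
  rw [prod_eq_prodHead]
  have hstep : prodHead x n = prodHead x (n-1) * x ⟨n-1, hkn⟩ := by
    have := prodHead_succ x (n-1) hkn
    rw [show n - 1 + 1 = n by omega] at this
    exact this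
  have hxl : x ⟨n-1, hkn⟩ = sumTail x (n-1) := by
    rw [sumTail_eq x (n-1) hkn, sumTail_of_ge x (n-1+1) (by omega)]
    ring
  have h1 := hchain.1
  have h2 := hchain.2
  rw [show n - 1 + 1 = n by omega] at h1 h2
  rw [hstep, hxl, h1, h2]
  ring

lemma ypt_prod (hg : 1 ≤ g) (hn : 2 ≤ n) :
    (∏ i, ypt g n n i) = (g:ℝ) / (tsylv g n : ℝ) ^ 2 := by
  have key : ∀ k, k ≤ n - 1 → prodHead (ypt g n n) k = (g:ℝ) / (tsylv g (k+1) : ℝ) := by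
    intro k
    induction k with
    | zero =>
      intro _
      rw [prodHead_zero, tsylv_one]
      have : (0:ℝ) < g := by exact_mod_cast hg
      field_simp
    | succ k ih =>
      intro hk
      have hkn : k < n := by omega
      rw [prodHead_succ _ k hkn, ih (by omega)]
      have hyk : ypt g n n ⟨k, hkn⟩ = 1 / (sylv g (k+1) : ℝ) := by
        simp only [ypt]
        rw [if_pos (show k + 1 ≤ n - 1 from by omega)]
      rw [hyk, tsylv_cast_succ hg (k+1) (by omega)]
      have ht1 : 0 < (tsylv g (k+1) : ℝ) := tsylv_pos hg (k+1) (by omega)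
      have hs1 : 0 < (sylv g (k+1) : ℝ) := sylv_pos hg (k+1) (by omega)
      rw [div_mul_div_comm, mul_one]
  have hkn : n - 1 < n := by omega
  rw [prod_eq_prodHead]
  have hstep : prodHead (ypt g n n) n = prodHead (ypt g n n) (n-1) * ypt g n n ⟨n-1, hkn⟩ := by
    have := prodHead_succ (ypt g n n) (n-1) hkn
    rw [show n - 1 + 1 = n by omega] at this
    exact this
  have hyl : ypt g n n ⟨n-1, hkn⟩ = 1 / (tsylv g n : ℝ) := by
    simp only [ypt]
    rw [if_neg (show ¬ (n - 1 + 1 ≤ n - 1) from by omega)]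
    rw [show n - n + 1 = 1 by omega]
    norm_num
  have hk2 := key (n-1) (le_refl _)
  rw [show n - 1 + 1 = n by omega] at hk2
  rw [hstep, hyl, hk2]
  ring
end tight
section compact
variable {g n : ℕ}

lemma continuous_prodHead (k : ℕ) : Continuous (fun x : Fin n → ℝ => prodHead x k) := by
  unfold prodHead
  exact continuous_finset_prod _ (fun i _ => continuous_apply i)

lemma continuous_sumTail (k : ℕ) : Continuous (fun x : Fin n → ℝ => sumTail x k) := by
  unfold sumTail
  exact continuous_finset_sum _ (fun i _ => continuous_apply i)

lemma isClosed_Agn : IsClosed (Agn g n) := by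
  have h1 : IsClosed {x : Fin n → ℝ | Antitone x} := by
    have : {x : Fin n → ℝ | Antitone x} =
        ⋂ (i : Fin n), ⋂ (j : Fin n), ⋂ (_ : i ≤ j), {x : Fin n → ℝ | x j ≤ x i} := by
      ext x
      simp only [Set.mem_setOf_eq, Set.mem_iInter]
      exact ⟨fun h i j hij => h hij, fun h a b hab => h a b hab⟩
    rw [this]
    exact isClosed_iInter fun i => isClosed_iInter fun j => isClosed_iInter fun _ =>
      isClosed_le (continuous_apply j) (continuous_apply i)
  have h2 : IsClosed {x : Fin n → ℝ | ∀ i, 0 ≤ x i} := by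
    have : {x : Fin n → ℝ | ∀ i, 0 ≤ x i} = ⋂ (i : Fin n), {x : Fin n → ℝ | 0 ≤ x i} := by
      ext x; simp
    rw [this]
    exact isClosed_iInter fun i => isClosed_le continuous_const (continuous_apply i)
  have h3 : IsClosed {x : Fin n → ℝ | (∑ i, x i) = 1 / (g:ℝ)} :=
    isClosed_eq (continuous_finset_sum _ (fun i _ => continuous_apply i)) continuous_const
  have h4 : IsClosed {x : Fin n → ℝ |
      ∀ k, 1 ≤ k → k ≤ n - 1 → prodHead x k ≤ (g : ℝ) * sumTail x k} := by
    have : {x : Fin n → ℝ | ∀ k, 1 ≤ k → k ≤ n - 1 → prodHead x k ≤ (g : ℝ) * sumTail x k} =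
        ⋂ (k : ℕ), ⋂ (_ : 1 ≤ k), ⋂ (_ : k ≤ n - 1),
          {x : Fin n → ℝ | prodHead x k ≤ (g : ℝ) * sumTail x k} := by
      ext x
      simp only [Set.mem_setOf_eq, Set.mem_iInter]
      try tauto
    rw [this]
    exact isClosed_iInter fun k => isClosed_iInter fun _ => isClosed_iInter fun _ =>
      isClosed_le (continuous_prodHead k) (continuous_const.mul (continuous_sumTail k))
  have : Agn g n = {x : Fin n → ℝ | Antitone x} ∩ ({x | ∀ i, 0 ≤ x i} ∩
      ({x | (∑ i, x i) = 1 / (g:ℝ)} ∩ {x | ∀ k, 1 ≤ k → k ≤ n - 1 →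
        prodHead x k ≤ (g : ℝ) * sumTail x k})) := by
    ext x
    simp only [Agn, Set.mem_setOf_eq, Set.mem_inter_iff]
    try tauto
  rw [this]
  exact h1.inter (h2.inter (h3.inter h4))

lemma isCompact_Agn (hg : 1 ≤ g) : IsCompact (Agn g n) := by
  apply IsCompact.of_isClosed_subset (isCompact_Icc (a := fun _ : Fin n => (0:ℝ))
    (b := fun _ : Fin n => (1:ℝ))) isClosed_Agn
  intro x hx
  constructor
  · intro i; exact hx.2.1 i
  · intro i; exact Agn.coord_le hg hx i

lemma exists_min (hg : 1 ≤ g) (hne : (Agn g n).Nonempty) :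
    ∃ z ∈ Agn g n, ∀ w ∈ Agn g n, (∏ i, z i) ≤ ∏ i, w i := by
  obtain ⟨z, hz, hmin⟩ := (isCompact_Agn (n := n) hg).exists_isMinOn hne
    (Continuous.continuousOn (continuous_finset_prod _ (fun i _ => continuous_apply i)))
  exact ⟨z, hz, fun w hw => hmin hw⟩
end compact
section perturb
variable {g n : ℕ} {z : Fin n → ℝ}

lemma antitone_of_adj (f : Fin n → ℝ)
    (h : ∀ i : ℕ, ∀ hi : i + 1 < n, f ⟨i+1, hi⟩ ≤ f ⟨i, by omega⟩) : Antitone f := by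
  have key : ∀ d : ℕ, ∀ a : ℕ, ∀ had : a + d < n, f ⟨a + d, had⟩ ≤ f ⟨a, by omega⟩ := by
    intro d
    induction d with
    | zero => intro a h0; exact le_refl _
    | succ d ih =>
      intro a had
      have h1 := h (a + d) (by omega)
      have h2 := ih a (by omega)
      exact le_trans (le_of_eq (congrArg f (Fin.ext rfl))) (le_trans h1 h2)
  intro a b hab
  have hab' : a.val ≤ b.val := hab
  have hbn : b.val < n := b.isLt
  have hb : b = ⟨a.val + (b.val - a.val), by omega⟩ :=
    Fin.ext (show b.val = a.val + (b.val - a.val) by omega)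
  rw [hb]
  exact le_trans (key (b.val - a.val) a.val (by omega))
    (le_of_eq (congrArg f (Fin.ext rfl)))

lemma perturb (hg : 1 ≤ g) (hz : z ∈ Agn g n) (p q : ℕ) (hpq : p < q) (hqn : q < n)
    (htop : ∀ _ : 0 < p, z ⟨p, by omega⟩ < z ⟨p-1, by omega⟩)
    (hbot : ∀ hq : q + 1 < n, z ⟨q+1, hq⟩ < z ⟨q, hqn⟩)
    (hslack : ∀ m, p + 1 ≤ m → m ≤ q → prodHead z m < (g:ℝ) * sumTail z m) :
    ∃ w ∈ Agn g n, (∏ i, w i) < ∏ i, z i := by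
  have hpn : p < n := lt_trans hpq hqn
  set p' : Fin n := ⟨p, hpn⟩ with hp'def
  set q' : Fin n := ⟨q, hqn⟩ with hq'def
  have hne : p' ≠ q' := by simp [hp'def, hq'def, Fin.ext_iff]; omega
  have hmkp : ∀ (i : ℕ) (hi : i < n), i ≠ p → (⟨i, hi⟩ : Fin n) ≠ p' :=
    fun i hi hne' h => hne' (congrArg Fin.val h)
  have hmkq : ∀ (i : ℕ) (hi : i < n), i ≠ q → (⟨i, hi⟩ : Fin n) ≠ q' :=
    fun i hi hne' h => hne' (congrArg Fin.val h)
  have hzpos := Agn.coord_pos hg hz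
  have hzle := Agn.coord_le hg hz
  have hz0 := hz.2.1
  have hmono := hz.1
  have hgpos : (0:ℝ) < g := by exact_mod_cast hg
  -- epsilon
  obtain ⟨ε, hεpos, hεTop, hεBot, hεq, hεδ⟩ :
      ∃ ε : ℝ, 0 < ε ∧ (∀ _ : 0 < p, ε ≤ z ⟨p-1, by omega⟩ - z p') ∧
        (∀ hb : q + 1 < n, ε ≤ z q' - z ⟨q+1, hb⟩) ∧ ε ≤ z q' ∧
        (∀ m, p + 1 ≤ m → m ≤ q → ε * (1 + (g:ℝ)) ≤ (g:ℝ) * sumTail z m - prodHead z m) := by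
    have hIcc : (Finset.Icc (p+1) q).Nonempty := by
      rw [Finset.nonempty_Icc]; omega
    set δ : ℝ := (Finset.Icc (p+1) q).inf' hIcc
      (fun m => (g:ℝ) * sumTail z m - prodHead z m) with hδdef
    have hδpos : 0 < δ := by
      rw [hδdef, Finset.lt_inf'_iff]
      intro m hm
      rw [Finset.mem_Icc] at hm
      linarith [hslack m hm.1 hm.2]
    have hδle : ∀ m, p + 1 ≤ m → m ≤ q → δ ≤ (g:ℝ) * sumTail z m - prodHead z m := by
      intro m h1 h2
      exact Finset.inf'_le _ (Finset.mem_Icc.2 ⟨h1, h2⟩)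
    set gapTop : ℝ := if hp : 0 < p then z ⟨p-1, by omega⟩ - z p' else 1 with hgapT
    set gapBot : ℝ := if hb : q + 1 < n then z q' - z ⟨q+1, hb⟩ else 1 with hgapB
    have hgapTpos : 0 < gapTop := by
      rw [hgapT]
      split
      · rename_i hp0; linarith [htop hp0]
      · norm_num
    have hgapBpos : 0 < gapBot := by
      rw [hgapB]
      split
      · rename_i hb0; linarith [hbot hb0]
      · norm_num
    refine ⟨min (min gapTop gapBot) (min (z q') (δ / (1 + g))), ?_, ?_, ?_, ?_, ?_⟩
    · apply lt_min (lt_min hgapTpos hgapBpos)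
      apply lt_min (hzpos q')
      positivity
    · intro hp0
      have h1 : min (min gapTop gapBot) (min (z q') (δ / (1 + g))) ≤ gapTop :=
        le_trans (min_le_left _ _) (min_le_left _ _)
      exact le_of_le_of_eq h1 (hgapT.trans (dif_pos hp0))
    · intro hb0
      have h1 : min (min gapTop gapBot) (min (z q') (δ / (1 + g))) ≤ gapBot :=
        le_trans (min_le_left _ _) (min_le_right _ _)
      exact le_of_le_of_eq h1 (hgapB.trans (dif_pos hb0))
    · exact le_trans (min_le_right _ _) (min_le_left _ _)
    · intro m h1 h2
      have h3 : min (min gapTop gapBot) (min (z q') (δ / (1 + g))) ≤ δ / (1+g) :=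
        le_trans (min_le_right _ _) (min_le_right _ _)
      rw [le_div_iff₀ (by positivity)] at h3
      calc min (min gapTop gapBot) (min (z q') (δ / (1 + ↑g))) * (1 + ↑g) ≤ δ := h3
        _ ≤ (g:ℝ) * sumTail z m - prodHead z m := hδle m h1 h2
  -- the perturbed point
  set w : Fin n → ℝ :=
    Function.update (Function.update z p' (z p' + ε)) q' (z q' - ε) with hwdef
  have hwq : w q' = z q' - ε := by
    rw [hwdef, Function.update_self]
  have hwp : w p' = z p' + ε := by
    rw [hwdef, Function.update_of_ne hne, Function.update_self]
  have hwo : ∀ i : Fin n, i ≠ p' → i ≠ q' → w i = z i := by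
    intro i h1 h2
    rw [hwdef, Function.update_of_ne h2, Function.update_of_ne h1]
  -- generic finset computations
  have prod_both : ∀ s : Finset (Fin n), p' ∈ s → q' ∈ s →
      (∏ i ∈ s, w i) = (z p' + ε) * (z q' - ε) * ∏ i ∈ (s.erase p').erase q', z i ∧
      (∏ i ∈ s, z i) = z p' * z q' * ∏ i ∈ (s.erase p').erase q', z i := by
    intro s hp1 hq1
    have hq2 : q' ∈ s.erase p' := Finset.mem_erase.2 ⟨(Ne.symm hne), hq1⟩
    have e1 : (∏ i ∈ s, w i) = w p' * ∏ i ∈ s.erase p', w i :=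
      (Finset.mul_prod_erase s w hp1).symm
    have e2 : (∏ i ∈ s.erase p', w i) = w q' * ∏ i ∈ (s.erase p').erase q', w i :=
      (Finset.mul_prod_erase _ w hq2).symm
    have e3 : (∏ i ∈ (s.erase p').erase q', w i) = ∏ i ∈ (s.erase p').erase q', z i := by
      apply Finset.prod_congr rfl
      intro i hi
      rw [Finset.mem_erase] at hi
      have hi2 := Finset.mem_erase.1 hi.2
      exact hwo i hi2.1 hi.1
    have f1 : (∏ i ∈ s, z i) = z p' * ∏ i ∈ s.erase p', z i :=
      (Finset.mul_prod_erase s z hp1).symm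
    have f2 : (∏ i ∈ s.erase p', z i) = z q' * ∏ i ∈ (s.erase p').erase q', z i :=
      (Finset.mul_prod_erase _ z hq2).symm
    constructor
    · rw [e1, e2, e3, hwp, hwq]; ring
    · rw [f1, f2]; ring
  have prod_ponly : ∀ s : Finset (Fin n), p' ∈ s → q' ∉ s →
      (∏ i ∈ s, w i) = (z p' + ε) * ∏ i ∈ s.erase p', z i ∧
      (∏ i ∈ s, z i) = z p' * ∏ i ∈ s.erase p', z i := by
    intro s hp1 hq1
    have e1 : (∏ i ∈ s, w i) = w p' * ∏ i ∈ s.erase p', w i :=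
      (Finset.mul_prod_erase s w hp1).symm
    have e3 : (∏ i ∈ s.erase p', w i) = ∏ i ∈ s.erase p', z i := by
      apply Finset.prod_congr rfl
      intro i hi
      rw [Finset.mem_erase] at hi
      exact hwo i hi.1 (fun hiq => hq1 (hiq ▸ hi.2))
    exact ⟨by rw [e1, e3, hwp], (Finset.mul_prod_erase s z hp1).symm⟩
  have prod_none : ∀ s : Finset (Fin n), p' ∉ s → q' ∉ s →
      (∏ i ∈ s, w i) = ∏ i ∈ s, z i := by
    intro s hp1 hq1
    apply Finset.prod_congr rfl
    intro i hi
    exact hwo i (fun h => hp1 (h ▸ hi)) (fun h => hq1 (h ▸ hi))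
  have sum_both : ∀ s : Finset (Fin n), p' ∈ s → q' ∈ s →
      (∑ i ∈ s, w i) = ∑ i ∈ s, z i := by
    intro s hp1 hq1
    have hq2 : q' ∈ s.erase p' := Finset.mem_erase.2 ⟨(Ne.symm hne), hq1⟩
    have e1 : (∑ i ∈ s, w i) = w p' + ∑ i ∈ s.erase p', w i :=
      (Finset.add_sum_erase s w hp1).symm
    have e2 : (∑ i ∈ s.erase p', w i) = w q' + ∑ i ∈ (s.erase p').erase q', w i :=
      (Finset.add_sum_erase _ w hq2).symm
    have e3 : (∑ i ∈ (s.erase p').erase q', w i) = ∑ i ∈ (s.erase p').erase q', z i := by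
      apply Finset.sum_congr rfl
      intro i hi
      rw [Finset.mem_erase] at hi
      have hi2 := Finset.mem_erase.1 hi.2
      exact hwo i hi2.1 hi.1
    have f1 : (∑ i ∈ s, z i) = z p' + ∑ i ∈ s.erase p', z i :=
      (Finset.add_sum_erase s z hp1).symm
    have f2 : (∑ i ∈ s.erase p', z i) = z q' + ∑ i ∈ (s.erase p').erase q', z i :=
      (Finset.add_sum_erase _ z hq2).symm
    rw [e1, e2, e3, hwp, hwq, f1, f2]
    ring
  have sum_qonly : ∀ s : Finset (Fin n), p' ∉ s → q' ∈ s →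
      (∑ i ∈ s, w i) = (∑ i ∈ s, z i) - ε := by
    intro s hp1 hq1
    have e1 : (∑ i ∈ s, w i) = w q' + ∑ i ∈ s.erase q', w i :=
      (Finset.add_sum_erase s w hq1).symm
    have e3 : (∑ i ∈ s.erase q', w i) = ∑ i ∈ s.erase q', z i := by
      apply Finset.sum_congr rfl
      intro i hi
      rw [Finset.mem_erase] at hi
      exact hwo i (fun h => hp1 (h ▸ hi.2)) hi.1
    have f1 : (∑ i ∈ s, z i) = z q' + ∑ i ∈ s.erase q', z i :=
      (Finset.add_sum_erase s z hq1).symm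
    rw [e1, e3, hwq, f1]
    ring
  have sum_none : ∀ s : Finset (Fin n), p' ∉ s → q' ∉ s →
      (∑ i ∈ s, w i) = ∑ i ∈ s, z i := by
    intro s hp1 hq1
    apply Finset.sum_congr rfl
    intro i hi
    exact hwo i (fun h => hp1 (h ▸ hi)) (fun h => hq1 (h ▸ hi))
  -- membership in filters
  have memLT : ∀ (i : Fin n) (m : ℕ),
      (i ∈ Finset.univ.filter (fun j : Fin n => j.val < m)) ↔ i.val < m := by
    intro i m; simp
  have memGE : ∀ (i : Fin n) (m : ℕ),
      (i ∈ Finset.univ.filter (fun j : Fin n => m ≤ j.val)) ↔ m ≤ i.val := by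
    intro i m; simp
  -- total sum
  have hsumw : (∑ i, w i) = ∑ i, z i :=
    sum_both Finset.univ (Finset.mem_univ _) (Finset.mem_univ _)
  -- w is antitone
  have hwanti : Antitone w := by
    apply antitone_of_adj
    intro i hi
    have hzq : z q' ≤ z p' := hmono (show p ≤ q by omega)
    by_cases hiq : i + 1 = q
    · have h1 : (⟨i+1, hi⟩ : Fin n) = q' := Fin.ext hiq
      rw [h1, hwq]
      by_cases hipp : i = p
      · have h4 : (⟨i, by omega⟩ : Fin n) = p' := Fin.ext hipp
        rw [h4, hwp]
        linarith
      · have h2 : (⟨i, by omega⟩ : Fin n) ≠ p' := hmkp i (by omega) hipp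
        have h3 : (⟨i, by omega⟩ : Fin n) ≠ q' := hmkq i (by omega) (by omega)
        rw [hwo _ h2 h3]
        have : z q' ≤ z ⟨i, by omega⟩ := hmono (show (i:ℕ) ≤ q by omega)
        linarith
    · by_cases hiq2 : i = q
      · have h1 : (⟨i, by omega⟩ : Fin n) = q' := Fin.ext hiq2
        have h2 : (⟨i+1, hi⟩ : Fin n) ≠ p' := hmkp (i+1) hi (by omega)
        have h3 : (⟨i+1, hi⟩ : Fin n) ≠ q' := hmkq (i+1) hi (by omega)
        rw [h1, hwq, hwo _ h2 h3]
        have hqn1 : q + 1 < n := by omega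
        have hgb : ε ≤ z q' - z ⟨q+1, hqn1⟩ := hεBot hqn1
        have he : z (⟨i+1, hi⟩ : Fin n) = z ⟨q+1, hqn1⟩ := by
          congr 1
          exact Fin.ext (show i + 1 = q + 1 by omega)
        rw [he]
        linarith
      · by_cases hip : i + 1 = p
        · have h1 : (⟨i+1, hi⟩ : Fin n) = p' := Fin.ext hip
          have h2 : (⟨i, by omega⟩ : Fin n) ≠ p' := hmkp i (by omega) (by omega)
          have h3 : (⟨i, by omega⟩ : Fin n) ≠ q' := hmkq i (by omega) (by omega)
          rw [h1, hwp, hwo _ h2 h3]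
          have hp0 : 0 < p := by omega
          have hgt : ε ≤ z ⟨p-1, by omega⟩ - z p' := hεTop hp0
          have he : z (⟨i, by omega⟩ : Fin n) = z ⟨p-1, by omega⟩ := by
            congr 1
            exact Fin.ext (show i = p - 1 by omega)
          rw [he]
          linarith
        · by_cases hip2 : i = p
          · have h1 : (⟨i, by omega⟩ : Fin n) = p' := Fin.ext hip2
            rw [h1, hwp]
            have h2 : (⟨i+1, hi⟩ : Fin n) ≠ p' := hmkp (i+1) hi (by omega)
            have h3 : (⟨i+1, hi⟩ : Fin n) ≠ q' := hmkq (i+1) hi (by omega)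
            rw [hwo _ h2 h3]
            have : z (⟨i+1, hi⟩ : Fin n) ≤ z p' := hmono (show (p:ℕ) ≤ i + 1 by omega)
            linarith
          · have h2 : (⟨i+1, hi⟩ : Fin n) ≠ p' := hmkp (i+1) hi (by omega)
            have h3 : (⟨i+1, hi⟩ : Fin n) ≠ q' := hmkq (i+1) hi (by omega)
            have h4 : (⟨i, by omega⟩ : Fin n) ≠ p' := hmkp i (by omega) (by omega)
            have h5 : (⟨i, by omega⟩ : Fin n) ≠ q' := hmkq i (by omega) (by omega)
            rw [hwo _ h2 h3, hwo _ h4 h5]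
            exact hmono (show (i:ℕ) ≤ i + 1 by omega)
  -- w nonneg
  have hwnn : ∀ i, 0 ≤ w i := by
    intro i
    by_cases h1 : i = q'
    · rw [h1, hwq]; linarith
    · by_cases h2 : i = p'
      · rw [h2, hwp]; linarith [hz0 p']
      · rw [hwo i h2 h1]; exact hz0 i
  -- constraints
  have hwcon : ∀ k, 1 ≤ k → k ≤ n - 1 → prodHead w k ≤ (g:ℝ) * sumTail w k := by
    intro m hm1 hm2
    by_cases hc1 : m ≤ p
    · -- unchanged
      have e1 : prodHead w m = prodHead z m := by
        apply prod_none
        · rw [memLT]; show ¬ (p < m); omega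
        · rw [memLT]; show ¬ (q < m); omega
      have e2 : sumTail w m = sumTail z m := by
        apply sum_both
        · rw [memGE]; show m ≤ p; omega
        · rw [memGE]; show m ≤ q; omega
      rw [e1, e2]
      exact hz.2.2.2 m hm1 hm2
    · by_cases hc2 : m ≤ q
      · -- the slack zone
        have hpm : p < m := by omega
        obtain ⟨eW, eZ⟩ := prod_ponly (Finset.univ.filter (fun j : Fin n => j.val < m))
          (by rw [memLT]; show p < m; omega) (by rw [memLT]; show ¬ (q < m); omega)
        have eS : sumTail w m = sumTail z m - ε := by
          apply sum_qonly
          · rw [memGE]; show ¬ (m ≤ p); omega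
          · rw [memGE]; show m ≤ q; omega
        have hR0 : 0 ≤ ∏ i ∈ (Finset.univ.filter (fun j : Fin n => j.val < m)).erase p', z i :=
          Finset.prod_nonneg (fun i _ => hz0 i)
        have hR1 : (∏ i ∈ (Finset.univ.filter (fun j : Fin n => j.val < m)).erase p', z i) ≤ 1 :=
          Finset.prod_le_one (fun i _ => hz0 i) (fun i _ => hzle i)
        have hδm := hεδ m (by omega) hc2
        have eW' : prodHead w m = (z p' + ε) *
            ∏ i ∈ (Finset.univ.filter (fun j : Fin n => j.val < m)).erase p', z i := eW
        show prodHead w m ≤ (g:ℝ) * sumTail w m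
        rw [eW', eS]
        have hPz : prodHead z m =
            z p' * ∏ i ∈ (Finset.univ.filter (fun j : Fin n => j.val < m)).erase p', z i := eZ
        set R := ∏ i ∈ (Finset.univ.filter (fun j : Fin n => j.val < m)).erase p', z i
        have : (z p' + ε) * R = prodHead z m + ε * R := by rw [hPz]; ring
        rw [this]
        have h5 : ε * R ≤ ε := by nlinarith
        nlinarith [hδm]
      · -- after q : product decreases, tail unchanged
        have hqm : q < m := by omega
        obtain ⟨eW, eZ⟩ := prod_both (Finset.univ.filter (fun j : Fin n => j.val < m))
          (by rw [memLT]; show p < m; omega) (by rw [memLT]; show q < m; omega)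
        have eS : sumTail w m = sumTail z m := by
          apply sum_none
          · rw [memGE]; show ¬ (m ≤ p); omega
          · rw [memGE]; show ¬ (m ≤ q); omega
        have eW' : prodHead w m = (z p' + ε) * (z q' - ε) *
            ∏ i ∈ ((Finset.univ.filter (fun j : Fin n => j.val < m)).erase p').erase q', z i := eW
        rw [eW', eS]
        have hR0 : 0 ≤ ∏ i ∈ ((Finset.univ.filter (fun j : Fin n => j.val < m)).erase p').erase q', z i :=
          Finset.prod_nonneg (fun i _ => hz0 i)
        set R := ∏ i ∈ ((Finset.univ.filter (fun j : Fin n => j.val < m)).erase p').erase q', z i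
        have hzq : z q' ≤ z p' := hmono (show p ≤ q by omega)
        have h6 : (z p' + ε) * (z q' - ε) ≤ z p' * z q' := by nlinarith
        have h7 : (z p' + ε) * (z q' - ε) * R ≤ z p' * z q' * R :=
          mul_le_mul_of_nonneg_right h6 hR0
        calc (z p' + ε) * (z q' - ε) * R ≤ z p' * z q' * R := h7
          _ = prodHead z m := by rw [prodHead]; exact eZ.symm
          _ ≤ (g:ℝ) * sumTail z m := hz.2.2.2 m hm1 hm2
  -- strict product decrease
  have hprod : (∏ i, w i) < ∏ i, z i := by
    obtain ⟨eW, eZ⟩ := prod_both Finset.univ (Finset.mem_univ _) (Finset.mem_univ _)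
    have eW' : (∏ i, w i) = (z p' + ε) * (z q' - ε) * ∏ i ∈ (Finset.univ.erase p').erase q', z i := eW
    have eZ' : (∏ i, z i) = z p' * z q' * ∏ i ∈ (Finset.univ.erase p').erase q', z i := eZ
    rw [eW', eZ']
    have hRpos : 0 < ∏ i ∈ (Finset.univ.erase p').erase q', z i :=
      Finset.prod_pos (fun i _ => hzpos i)
    have hzq : z q' ≤ z p' := hmono (show p ≤ q by omega)
    have h6 : (z p' + ε) * (z q' - ε) < z p' * z q' := by nlinarith
    exact mul_lt_mul_of_pos_right h6 hRpos
  exact ⟨w, ⟨hwanti, hwnn, by rw [hsumw]; exact hz.2.2.1, hwcon⟩, hprod⟩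
end perturb
section smooth
variable {g n : ℕ} {z : Fin n → ℝ}

/-- Slack propagates through a block of equal coordinates. -/
lemma slack_propagate (hg : 1 ≤ g) (hz : z ∈ Agn g n) (m : ℕ) (hm1 : 1 ≤ m)
    (hm2 : m + 1 ≤ n - 1)
    (heq : z ⟨m, by omega⟩ = z ⟨m+1, by omega⟩)
    (hsl : prodHead z m < (g:ℝ) * sumTail z m) :
    prodHead z (m+1) < (g:ℝ) * sumTail z (m+1) := by
  have hmn : m < n := by omega
  have hm1n : m + 1 < n := by omega
  have hzpos := Agn.coord_pos hg hz
  have hz0 := hz.2.1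
  have hgpos : (0:ℝ) < g := by exact_mod_cast hg
  set c := z ⟨m, hmn⟩ with hcdef
  have hcpos : 0 < c := hzpos _
  have hS1 : sumTail z (m+1) = z ⟨m+1, hm1n⟩ + sumTail z (m+2) := sumTail_eq z (m+1) hm1n
  have hcS : c ≤ sumTail z (m+1) := by
    rw [hS1, ← heq]
    have := sumTail_nonneg hz0 (m+2)
    linarith
  have hc2 : 2 * c ≤ 1 := by
    have h0m : (⟨0, by omega⟩ : Fin n) ≠ ⟨m, hmn⟩ := by
      intro h
      have h2 : (0:ℕ) = m := congrArg Fin.val h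
      omega
    have hsub : ({⟨0, by omega⟩, ⟨m, hmn⟩} : Finset (Fin n)) ⊆ Finset.univ := by
      intro i _; exact Finset.mem_univ i
    have hsum2 : z ⟨0, by omega⟩ + z ⟨m, hmn⟩ ≤ ∑ i, z i := by
      rw [← Finset.sum_pair h0m]
      exact Finset.sum_le_sum_of_subset_of_nonneg hsub (fun i _ _ => hz0 i)
    have hle1 : (∑ i, z i) ≤ 1 := by
      rw [hz.2.2.1, div_le_one hgpos]
      exact_mod_cast hg
    have hcz0 : c ≤ z ⟨0, by omega⟩ := hz.1 (show (0:ℕ) ≤ m from by omega)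
    linarith
  have hPsucc : prodHead z (m+1) = prodHead z m * c := prodHead_succ z m hmn
  have hSm : sumTail z m = c + sumTail z (m+1) := sumTail_eq z m hmn
  set S := sumTail z (m+1) with hSdef
  have hS0 : 0 ≤ S := sumTail_nonneg hz0 (m+1)
  have hstep : prodHead z m * c < (g:ℝ) * (c + S) * c := by
    apply mul_lt_mul_of_pos_right _ hcpos
    rw [← hSm]; exact hsl
  have hfinal : (g:ℝ) * (c + S) * c ≤ (g:ℝ) * S := by
    have h1 : (c + S) * c ≤ S := by nlinarith
    calc (g:ℝ) * (c + S) * c = (g:ℝ) * ((c + S) * c) := by ring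
      _ ≤ (g:ℝ) * S := mul_le_mul_of_nonneg_left h1 (le_of_lt hgpos)
  rw [hPsucc]
  linarith

/-- If some constraint is slack, the product is not minimal. -/
lemma exists_smaller (hg : 1 ≤ g) (hz : z ∈ Agn g n) (k0 : ℕ) (hk01 : 1 ≤ k0)
    (hk02 : k0 ≤ n - 1) (hsl0 : prodHead z k0 < (g:ℝ) * sumTail z k0) :
    ∃ w ∈ Agn g n, (∏ i, w i) < ∏ i, z i := by
  have hn2 : 2 ≤ n := by omega
  have hgpos : (0:ℝ) < g := by exact_mod_cast hg
  have hzpos := Agn.coord_pos hg hz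
  classical
  set T := (Finset.Icc 1 (n-1)).filter
    (fun k => prodHead z k < (g:ℝ) * sumTail z k) with hTdef
  have hTne : T.Nonempty :=
    ⟨k0, by rw [hTdef, Finset.mem_filter, Finset.mem_Icc]; exact ⟨⟨hk01, hk02⟩, hsl0⟩⟩
  set a := T.min' hTne with hadef
  have haT : a ∈ T := Finset.min'_mem _ _
  have ha1 : 1 ≤ a ∧ a ≤ n - 1 := by
    have := haT; rw [hTdef, Finset.mem_filter, Finset.mem_Icc] at this; exact this.1
  have haslack : prodHead z a < (g:ℝ) * sumTail z a := by
    have := haT; rw [hTdef, Finset.mem_filter] at this; exact this.2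
  have hamin : ∀ m, 1 ≤ m → m ≤ n - 1 → prodHead z m < (g:ℝ) * sumTail z m → a ≤ m := by
    intro m h1 h2 h3
    exact Finset.min'_le _ _ (by rw [hTdef, Finset.mem_filter, Finset.mem_Icc]; exact ⟨⟨h1, h2⟩, h3⟩)
  have htightlt : ∀ m, 1 ≤ m → m < a → prodHead z m = (g:ℝ) * sumTail z m := by
    intro m h1 h2
    rcases lt_or_eq_of_le (hz.2.2.2 m h1 (by omega)) with h | h
    · exact absurd (hamin m h1 (by omega) h) (by omega)
    · exact h
  -- room above position a-1
  have htop : ∀ _ : 0 < a - 1, z ⟨a-1, by omega⟩ < z ⟨a-1-1, by omega⟩ := by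
    intro hp0
    have ha2 : 2 ≤ a := by omega
    have hchain := tight_chainK hg hz (a-1) (by omega)
      (fun m hm1 hm2 => htightlt m hm1 (by omega))
    obtain ⟨hSa1, hPa1⟩ := hchain (a-1) (le_refl _)
    obtain ⟨hSa2, hPa2⟩ := hchain (a-2) (by omega)
    rw [show a - 1 + 1 = a from by omega] at hSa1 hPa1
    rw [show a - 2 + 1 = a - 1 from by omega] at hSa2 hPa2
    have ht1 : 0 < (tsylv g (a-1) : ℝ) := tsylv_pos hg (a-1) (by omega)
    have hta : 0 < (tsylv g a : ℝ) := tsylv_pos hg a (by omega)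
    have hS2eq : sumTail z (a-2) = z ⟨a-2, by omega⟩ + sumTail z (a-1) := by
      have h := sumTail_eq z (a-2) (show a - 2 < n from by omega)
      rw [show a - 2 + 1 = a - 1 from by omega] at h
      exact h
    have hza2 : z ⟨a-2, by omega⟩ = 1 / (tsylv g (a-1) : ℝ) - 1 / (tsylv g a : ℝ) := by
      rw [hS2eq, hSa1] at hSa2
      linarith
    -- slack inequality at a
    have hPstep : prodHead z a = prodHead z (a-1) * z ⟨a-1, by omega⟩ := by
      have h := prodHead_succ z (a-1) (show a - 1 < n from by omega)
      rw [show a - 1 + 1 = a from by omega] at h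
      exact h
    have hSstep : sumTail z (a-1) = z ⟨a-1, by omega⟩ + sumTail z a := by
      have h := sumTail_eq z (a-1) (show a - 1 < n from by omega)
      rw [show a - 1 + 1 = a from by omega] at h
      exact h
    set c := z ⟨a-1, by omega⟩ with hcdef
    have hslA := haslack
    rw [hPstep, hPa1] at hslA
    have hSa : sumTail z a = 1 / (tsylv g a : ℝ) - c := by
      rw [hSstep] at hSa1; linarith
    rw [hSa] at hslA
    -- (g/t_a) c < g (1/t_a - c)  ⇒  c (1 + t_a) < 1
    have hkey : c * (1 + (tsylv g a : ℝ)) < 1 := by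
      have h1 : (g:ℝ) / (tsylv g a : ℝ) * c * (tsylv g a : ℝ) <
          (g:ℝ) * (1 / (tsylv g a : ℝ) - c) * (tsylv g a : ℝ) :=
        mul_lt_mul_of_pos_right hslA hta
      have h2 : (g:ℝ) / (tsylv g a : ℝ) * c * (tsylv g a : ℝ) = (g:ℝ) * c := by
        field_simp
      have h3 : (g:ℝ) * (1 / (tsylv g a : ℝ) - c) * (tsylv g a : ℝ) =
          (g:ℝ) - (g:ℝ) * c * (tsylv g a : ℝ) := by
        field_simp
      rw [h2, h3] at h1
      nlinarith
    have hcbound : c < 1 / (1 + (tsylv g a : ℝ)) := by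
      rw [lt_div_iff₀ (by linarith)]
      exact hkey
    -- z⟨a-2⟩ = 1/(1 + t_{a-1})
    have hza2' : z ⟨a-2, by omega⟩ = 1 / (1 + (tsylv g (a-1) : ℝ)) := by
      rw [hza2]
      have h := one_div_tsylv_sub hg (a-1) (by omega)
      rw [show a - 1 + 1 = a from by omega] at h
      rw [h, sylv_cast_eq hg (a-1) (by omega)]
      ring_nf
    -- t_{a-1} ≤ t_a
    have hmono_t : (tsylv g (a-1) : ℝ) ≤ (tsylv g a : ℝ) := by
      have h := tsylv_succ hg (a-1) (by omega)
      rw [show a - 1 + 1 = a from by omega] at h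
      have hs : 1 ≤ sylv g (a-1) := by
        have := sylv_ge hg (a-1) (by omega); omega
      have : tsylv g (a-1) ≤ tsylv g a := by
        rw [h]
        exact Nat.le_mul_of_pos_right _ (by omega)
      exact_mod_cast this
    have : (1:ℝ) / (1 + (tsylv g a : ℝ)) ≤ 1 / (1 + (tsylv g (a-1) : ℝ)) := by
      apply one_div_le_one_div_of_le (by linarith) (by linarith)
    have hgoal : (⟨a-1-1, by omega⟩ : Fin n) = (⟨a-2, by omega⟩ : Fin n) :=
      Fin.ext (show a - 1 - 1 = a - 2 by omega)
    rw [hgoal, hza2']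
    calc z ⟨a-1, by omega⟩ < 1 / (1 + (tsylv g a : ℝ)) := hcbound
      _ ≤ 1 / (1 + (tsylv g (a-1) : ℝ)) := this
  -- find the bottom of the equal block, propagating slack
  have hfind : ∀ d r, a ≤ r → r ≤ n - 1 → n - 1 - r ≤ d →
      (∀ m, a ≤ m → m ≤ r → prodHead z m < (g:ℝ) * sumTail z m) →
      ∃ qq, a ≤ qq ∧ qq ≤ n - 1 ∧
        (∀ m, a ≤ m → m ≤ qq → prodHead z m < (g:ℝ) * sumTail z m) ∧
        (∀ hb : qq + 1 < n, z ⟨qq+1, hb⟩ < z ⟨qq, by omega⟩) := by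
    intro d
    induction d with
    | zero =>
      intro r hr1 hr2 hr3 hsl
      exact ⟨r, hr1, hr2, hsl, fun hb => absurd hb (by omega)⟩
    | succ d ih =>
      intro r hr1 hr2 hr3 hsl
      by_cases hrn : r = n - 1
      · exact ⟨r, hr1, hr2, hsl, fun hb => absurd hb (by omega)⟩
      · have hrn' : r + 1 ≤ n - 1 := by omega
        have hrnn : r + 1 < n := by omega
        rcases lt_or_ge (z ⟨r+1, hrnn⟩) (z ⟨r, by omega⟩) with hlt | hge
        · exact ⟨r, hr1, hr2, hsl, fun hb => hlt⟩
        · have heq : z ⟨r, by omega⟩ = z ⟨r+1, hrnn⟩ := by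
            have h2 : z ⟨r+1, hrnn⟩ ≤ z ⟨r, by omega⟩ :=
              hz.1 (show (r:ℕ) ≤ r + 1 from by omega)
            linarith
          have hnew := slack_propagate hg hz r (by omega) hrn' heq (hsl r hr1 (le_refl _))
          apply ih (r+1) (by omega) hrn' (by omega)
          intro m hm1 hm2
          rcases Nat.lt_or_ge m (r+1) with h | h
          · exact hsl m hm1 (by omega)
          · have : m = r + 1 := by omega
            rw [this]; exact hnew
  obtain ⟨qq, hq1, hq2, hqsl, hqbot⟩ :=
    hfind (n-1) a (le_refl _) ha1.2 (by omega)
      (fun m hm1 hm2 => by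
        have : m = a := by omega
        rw [this]; exact haslack)
  -- apply the perturbation
  apply perturb hg hz (a-1) qq (by omega) (by omega)
  · exact htop
  · exact hqbot
  · intro m hm1 hm2
    exact hqsl m (by omega) hm2
end smooth

/-- For `g ≥ 1`, `n ≥ 3` and every `x ∈ A_g^n` one has
`x₁⋯xₙ ≥ g/t_{g,n}²`, with equality iff `x = y(g,n,n)`; that is, `f_n` attains its
minimum on `A_g^n` precisely at `y(g,n,n) = (1/s_{g,1},…,1/s_{g,n-1},1/t_{g,n})`
with minimum value `g/t_{g,n}²`. -/
theorem fn_minimum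
    (g n : ℕ) (hg : 1 ≤ g) (hn : 3 ≤ n)
    (x : Fin n → ℝ) (hx : x ∈ Agn g n) :
    (g : ℝ) / (tsylv g n : ℝ) ^ 2 ≤ ∏ i, x i ∧
      ((∏ i, x i) = (g : ℝ) / (tsylv g n : ℝ) ^ 2 ↔ x = ypt g n n) := by
  have hne : (Agn g n).Nonempty := ⟨x, hx⟩
  obtain ⟨z, hzA, hzmin⟩ := exists_min hg hne
  have hztight : ∀ k, 1 ≤ k → k ≤ n - 1 → prodHead z k = (g:ℝ) * sumTail z k := by
    intro k h1 h2
    rcases lt_or_eq_of_le (hzA.2.2.2 k h1 h2) with h | h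
    · obtain ⟨w, hwA, hww⟩ := exists_smaller hg hzA k h1 h2 h
      linarith [hzmin w hwA]
    · exact h
  have hzval : (∏ i, z i) = (g : ℝ) / (tsylv g n : ℝ) ^ 2 :=
    tight_value hg hzA (by omega) hztight
  have hineq : (g : ℝ) / (tsylv g n : ℝ) ^ 2 ≤ ∏ i, x i := by
    rw [← hzval]; exact hzmin x hx
  refine ⟨hineq, ?_, ?_⟩
  · intro h
    have hxtight : ∀ k, 1 ≤ k → k ≤ n - 1 → prodHead x k = (g:ℝ) * sumTail x k := by
      intro k h1 h2
      rcases lt_or_eq_of_le (hx.2.2.2 k h1 h2) with hlt | heq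
      · obtain ⟨w, hwA, hww⟩ := exists_smaller hg hx k h1 h2 hlt
        have h3 : (∏ i, z i) ≤ ∏ i, w i := hzmin w hwA
        rw [hzval, ← h] at h3
        linarith
      · exact heq
    exact tight_coord hg hx hxtight (by omega)
  · intro h
    rw [h]
    exact ypt_prod hg (by omega)
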